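/- arXiv:1112.3427 — 2 statements merged into one kernel-verified Lean document; each statement's English description precedes it below -/
import Mathlib

section
/- For every fixed p with 0 < p < 1, the heavily trimmed upper mean converges in probability to the upper cluster mean: (1/(n − ⌈np⌉)) ∑_{i=⌈np⌉+1}^{n} W_{(i)} →^P μ_u(p) as n → ∞. -/
open MeasureTheory ProbabilityTheory Filter Set
open scoped Topology

/-- The `i`-th order statistic (1-indexed) of the sample `W 0, …, W (n-1)`. -/
noncomputable def orderStat {Ω : Type*} (W : ℕ → Ω → ℝ) (n i : ℕ) (ω : Ω) : ℝ :=
  (List.insertionSort (· ≤ ·) (List.ofFn fun j : Fin n => W j ω)).getD (i - 1) 0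

section Aux

lemma sum_getD_map (s : List ℝ) (g : ℝ → ℝ) :
    (s.map g).sum = ∑ j ∈ Finset.range s.length, g (s.getD j 0) := by
  conv_lhs => rw [← List.ofFn_get s]
  rw [List.map_ofFn, List.sum_ofFn]
  rw [← Fin.sum_univ_eq_sum_range (fun j => g (s.getD j 0)) s.length]
  refine Finset.sum_congr rfl fun j _ => ?_
  simp [List.getD_eq_getElem, j.isLt, Function.comp]

lemma trimsum_le (l : List ℝ) (k : ℕ) (t : ℝ) :
    ∑ j ∈ Finset.Ico k l.length, (List.insertionSort (· ≤ ·) l).getD j 0 ≤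
      ((l.length - k : ℕ) : ℝ) * t + (l.map (fun x => max (x - t) 0)).sum := by
  set s := List.insertionSort (· ≤ ·) l with hs
  have hlen : s.length = l.length := (List.perm_insertionSort _ l).length_eq
  have hperm : List.Perm (s.map fun x => max (x - t) 0) (l.map fun x => max (x - t) 0) :=
    (List.perm_insertionSort _ l).map _
  rw [← hperm.sum_eq, sum_getD_map, hlen]
  have h1 : ∀ j ∈ Finset.Ico k l.length, s.getD j 0 ≤ t + max (s.getD j 0 - t) 0 := by
    intro j _; rcases le_total (s.getD j 0) t with h | h
    · simpa using h.trans (by simp)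
    · have : max (s.getD j 0 - t) 0 = s.getD j 0 - t := max_eq_left (by linarith)
      simp only [this]; linarith
  calc ∑ j ∈ Finset.Ico k l.length, s.getD j 0
      ≤ ∑ j ∈ Finset.Ico k l.length, (t + max (s.getD j 0 - t) 0) := Finset.sum_le_sum h1
    _ = ((l.length - k : ℕ) : ℝ) * t + ∑ j ∈ Finset.Ico k l.length, max (s.getD j 0 - t) 0 := by
        rw [Finset.sum_add_distrib, Finset.sum_const, Nat.card_Ico, nsmul_eq_mul]
    _ ≤ ((l.length - k : ℕ) : ℝ) * t + ∑ j ∈ Finset.range l.length, max (s.getD j 0 - t) 0 := by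
        refine add_le_add_right (Finset.sum_le_sum_of_subset_of_nonneg ?_
          (fun i _ _ => le_max_right _ 0)) _
        rw [Finset.range_eq_Ico]; exact Finset.Ico_subset_Ico (Nat.zero_le _) le_rfl
    _ = _ := by ring_nf

lemma sorted_getD_mono {s : List ℝ} (hs : s.Pairwise (· ≤ ·)) {i j : ℕ}
    (hij : i ≤ j) (hj : j < s.length) : s.getD i 0 ≤ s.getD j 0 := by
  have hi : i < s.length := lt_of_le_of_lt hij hj
  rw [List.getD_eq_getElem s 0 hi, List.getD_eq_getElem s 0 hj]
  exact hs.rel_get_of_le (a := ⟨i, hi⟩) (b := ⟨j, hj⟩) hij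

lemma trimsum_eq (l : List ℝ) (k : ℕ) (hk : k < l.length) :
    ∑ j ∈ Finset.Ico k l.length, (List.insertionSort (· ≤ ·) l).getD j 0 =
      ((l.length - k : ℕ) : ℝ) * ((List.insertionSort (· ≤ ·) l).getD k 0) +
      (l.map (fun x => max (x - (List.insertionSort (· ≤ ·) l).getD k 0) 0)).sum := by
  set s := List.insertionSort (· ≤ ·) l with hs
  set t := s.getD k 0 with ht
  have hlen : s.length = l.length := (List.perm_insertionSort _ l).length_eq
  have hsort : s.Pairwise (· ≤ ·) := List.pairwise_insertionSort _ l
  have hperm : List.Perm (s.map fun x => max (x - t) 0) (l.map fun x => max (x - t) 0) :=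
    (List.perm_insertionSort _ l).map _
  rw [← hperm.sum_eq, sum_getD_map, hlen]
  have hsplit : Finset.range l.length = Finset.Ico 0 k ∪ Finset.Ico k l.length := by
    rw [Finset.range_eq_Ico, Finset.Ico_union_Ico_eq_Ico (Nat.zero_le _) hk.le]
  have hdisj : Disjoint (Finset.Ico 0 k) (Finset.Ico k l.length) :=
    Finset.Ico_disjoint_Ico_consecutive 0 k l.length
  rw [hsplit, Finset.sum_union hdisj]
  have h1 : ∑ j ∈ Finset.Ico 0 k, max (s.getD j 0 - t) 0 = 0 := by
    refine Finset.sum_eq_zero fun j hj => ?_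
    simp only [Finset.mem_Ico] at hj
    have : s.getD j 0 ≤ t := sorted_getD_mono hsort hj.2.le (hlen ▸ hk)
    exact max_eq_right (by linarith)
  have h2 : ∀ j ∈ Finset.Ico k l.length, max (s.getD j 0 - t) 0 = s.getD j 0 - t := by
    intro j hj
    simp only [Finset.mem_Ico] at hj
    have : t ≤ s.getD j 0 := sorted_getD_mono hsort hj.1 (hlen ▸ hj.2)
    exact max_eq_left (by linarith)
  rw [h1, Finset.sum_congr rfl h2, zero_add, Finset.sum_sub_distrib, Finset.sum_const,
    Nat.card_Ico, nsmul_eq_mul]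
  ring

lemma ofFn_map_sum {n : ℕ} (u : ℕ → ℝ) (g : ℝ → ℝ) :
    ((List.ofFn (fun j : Fin n => u j)).map g).sum = ∑ j ∈ Finset.range n, g (u j) := by
  rw [List.map_ofFn, List.sum_ofFn, ← Fin.sum_univ_eq_sum_range (fun j => g (u j)) n]
  simp [Function.comp]

lemma trim_reindex {Ω : Type*} (W : ℕ → Ω → ℝ) (n k : ℕ) (ω : Ω) :
    ∑ i ∈ Finset.Icc (k+1) n, orderStat W n i ω =
      ∑ j ∈ Finset.Ico k n,
        (List.insertionSort (· ≤ ·) (List.ofFn fun j : Fin n => W j ω)).getD j 0 := by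
  refine Finset.sum_nbij' (fun i => i - 1) (fun j => j + 1) ?_ ?_ ?_ ?_ ?_
  · intro i hi; simp only [Finset.mem_Icc] at hi; simp only [Finset.mem_Ico]; omega
  · intro j hj; simp only [Finset.mem_Ico] at hj; simp only [Finset.mem_Icc]; omega
  · intro i hi; simp only [Finset.mem_Icc] at hi; show i - 1 + 1 = i; omega
  · intro j hj; show j + 1 - 1 = j; omega
  · intro i hi; rfl

lemma measurable_finset_inf' {Ω : Type*} [MeasurableSpace Ω] {ι : Type*} (s : Finset ι)
    (hs : s.Nonempty) (g : ι → Ω → ℝ) (hg : ∀ i, Measurable (g i)) :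
    Measurable (fun ω => s.inf' hs (fun i => g i ω)) := by
  induction hs using Finset.Nonempty.cons_induction with
  | singleton i => simpa using hg i
  | cons i t his ht ih =>
      have : (fun ω => (Finset.cons i t his).inf' (Finset.cons_nonempty his) fun i => g i ω)
          = fun ω => min (g i ω) (t.inf' ht fun i => g i ω) := by
        funext ω; exact Finset.inf'_cons (f := fun i => g i ω) (H := ht)
      rw [this]
      exact (hg i).min ih

lemma trimsum_inf' {Ω : Type*} (W : ℕ → Ω → ℝ) (n k : ℕ) (hk : k < n) (ω : Ω) :
    ∑ j ∈ Finset.Ico k n,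
        (List.insertionSort (· ≤ ·) (List.ofFn fun j : Fin n => W j ω)).getD j 0 =
      (Finset.range n).inf' ⟨0, Finset.mem_range.2 (by omega)⟩
        (fun j => ((n - k : ℕ) : ℝ) * W j ω +
          ∑ j' ∈ Finset.range n, max (W j' ω - W j ω) 0) := by
  set l : List ℝ := List.ofFn fun j : Fin n => W j ω with hl
  have hlen : l.length = n := List.length_ofFn
  refine le_antisymm ?_ ?_
  · refine Finset.le_inf' _ _ fun j _ => ?_
    have := trimsum_le l k (W j ω)
    rw [hlen, ofFn_map_sum (fun j' => W j' ω) (fun x => max (x - W j ω) 0)] at this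
    exact this
  · set s := List.insertionSort (· ≤ ·) l with hs
    have hlen' : s.length = l.length := (List.perm_insertionSort _ l).length_eq
    have hmem : s.getD k 0 ∈ s := by
      rw [List.getD_eq_getElem s 0 (by omega)]
      exact List.getElem_mem _
    have hmem' : s.getD k 0 ∈ l := (List.perm_insertionSort _ l).subset hmem
    obtain ⟨j0, hj0⟩ := (List.mem_ofFn).1 (hl ▸ hmem')
    refine le_trans (Finset.inf'_le _ (Finset.mem_range.2 j0.isLt)) ?_
    have := trimsum_eq l k (by omega)
    rw [hlen, ofFn_map_sum (fun j' => W j' ω) (fun x => max (x - s.getD k 0) 0)] at this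
    rw [this, hj0]

lemma measurable_trimsum {Ω : Type*} [MeasurableSpace Ω] (W : ℕ → Ω → ℝ)
    (hW : ∀ i, Measurable (W i)) (n k : ℕ) (hk : k < n) :
    Measurable (fun ω => ∑ j ∈ Finset.Ico k n,
      (List.insertionSort (· ≤ ·) (List.ofFn fun j : Fin n => W j ω)).getD j 0) := by
  have : (fun ω => ∑ j ∈ Finset.Ico k n,
      (List.insertionSort (· ≤ ·) (List.ofFn fun j : Fin n => W j ω)).getD j 0) =
      fun ω => (Finset.range n).inf' ⟨0, Finset.mem_range.2 (by omega)⟩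
        (fun j => ((n - k : ℕ) : ℝ) * W j ω +
          ∑ j' ∈ Finset.range n, max (W j' ω - W j ω) 0) :=
    funext fun ω => trimsum_inf' W n k hk ω
  rw [this]
  refine measurable_finset_inf' _ _ _ fun j => ?_
  refine (measurable_const.mul (hW j)).add ?_
  refine Finset.measurable_sum _ fun j' _ => ?_
  exact ((hW j').sub (hW j)).max measurable_const

lemma tailP {Ω : Type*} [MeasurableSpace Ω] (P : Measure Ω) [IsProbabilityMeasure P]
    (W0 : Ω → ℝ) (hm : Measurable W0) (F : ℝ → ℝ)
    (hcdf : ∀ x, F x = (P (W0 ⁻¹' Iic x)).toReal) (x : ℝ) :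
    P (W0 ⁻¹' Ioi x) = ENNReal.ofReal (1 - F x) := by
  have h1 : W0 ⁻¹' Ioi x = (W0 ⁻¹' Iic x)ᶜ := by ext ω; simp [not_le]
  have hfin : P (W0 ⁻¹' Iic x) ≠ ⊤ := measure_ne_top _ _
  have h2 : P (W0 ⁻¹' Iic x) = ENNReal.ofReal (F x) := by
    rw [hcdf x, ENNReal.ofReal_toReal hfin]
  have hF0 : 0 ≤ F x := by rw [hcdf x]; exact ENNReal.toReal_nonneg
  rw [h1, measure_compl (hm measurableSet_Iic) hfin, measure_univ, h2,
    ENNReal.ofReal_sub 1 hF0, ENNReal.ofReal_one]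

lemma quantile_integral {Ω : Type*} [MeasurableSpace Ω] (P : Measure Ω) [IsProbabilityMeasure P]
    (W0 : Ω → ℝ) (hm : Measurable W0) (F Q : ℝ → ℝ)
    (hcdf : ∀ x, F x = (P (W0 ⁻¹' Iic x)).toReal)
    (hQ : ∀ p ∈ Ioo (0 : ℝ) 1, F (Q p) = p ∧ ∀ y, F y = p → y = Q p)
    (hint : Integrable W0 P) (p : ℝ) (hp : p ∈ Ioo (0 : ℝ) 1) :
    IntegrableOn Q (Ioo p 1) volume ∧
    ∫ q in p..(1 : ℝ), Q q = (∫ ω, max (W0 ω - Q p) 0 ∂P) + (1 - p) * Q p := by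
  obtain ⟨hp0, hp1⟩ := hp
  set t₀ := Q p with ht₀
  have hFt₀ : F t₀ = p := (hQ p ⟨hp0, hp1⟩).1
  have Fmono : Monotone F := by
    intro x y hxy
    rw [hcdf x, hcdf y]
    exact ENNReal.toReal_mono (measure_ne_top _ _)
      (measure_mono (preimage_mono (Iic_subset_Iic.2 hxy)))
  have hiff : ∀ q ∈ Ioo (0:ℝ) 1, ∀ y : ℝ, (y < Q q ↔ F y < q) := by
    intro q hq y
    constructor
    · intro h
      rcases lt_or_ge (F y) q with h' | h'
      · exact h'
      rcases eq_or_lt_of_le h' with he | hl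
      · exact absurd ((hQ q hq).2 y he.symm) (ne_of_lt h)
      · have h2 := Fmono h.le
        rw [(hQ q hq).1] at h2
        linarith
    · intro h
      by_contra hle
      push_neg at hle
      have := Fmono hle
      rw [(hQ q hq).1] at this
      linarith
  have QmonoOn : MonotoneOn Q (Ioo p 1) := by
    intro a ha b hb hab
    by_contra hlt
    push_neg at hlt
    have ha' : a ∈ Ioo (0:ℝ) 1 := ⟨hp0.trans ha.1, ha.2⟩
    have hb' : b ∈ Ioo (0:ℝ) 1 := ⟨hp0.trans hb.1, hb.2⟩
    have : F (Q b) < a := (hiff a ha' (Q b)).1 hlt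
    rw [(hQ b hb').1] at this
    linarith
  have hQge : ∀ q ∈ Ioo p 1, t₀ < Q q := by
    intro q hq
    have hq' : q ∈ Ioo (0:ℝ) 1 := ⟨hp0.trans hq.1, hq.2⟩
    exact (hiff q hq' t₀).2 (by rw [hFt₀]; exact hq.1)
  have intplus : Integrable (fun ω => max (W0 ω - t₀) 0) P :=
    (hint.sub (integrable_const t₀)).pos_part
  have C1 : ∫⁻ ω, ENNReal.ofReal (max (W0 ω - t₀) 0) ∂P
      = ∫⁻ t in Ioi (0:ℝ), ENNReal.ofReal (1 - F (t₀ + t)) := by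
    rw [lintegral_eq_lintegral_meas_lt P (f := fun ω => max (W0 ω - t₀) 0)
      (Eventually.of_forall fun ω => le_max_right _ _)
      (((hm.sub measurable_const).max measurable_const).aemeasurable)]
    refine setLIntegral_congr_fun measurableSet_Ioi (fun t ht => ?_)
    have ht' : (0:ℝ) < t := ht
    have hset : {a : Ω | t < max (W0 a - t₀) 0} = W0 ⁻¹' Ioi (t₀ + t) := by
      ext ω
      simp only [mem_setOf_eq, mem_preimage, mem_Ioi, lt_max_iff]
      constructor
      · rintro (h | h)
        · linarith
        · linarith
      · intro h; left; linarith
    rw [hset, tailP P W0 hm F hcdf (t₀ + t)]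
  have hmeasQ : AEMeasurable (fun q => Q q - t₀) (volume.restrict (Ioo p 1)) :=
    (aemeasurable_restrict_of_monotoneOn measurableSet_Ioo
      (fun a ha b hb hab => by simpa using QmonoOn ha hb hab)).sub aemeasurable_const
  have C2 : ∫⁻ q in Ioo p 1, ENNReal.ofReal (Q q - t₀)
      = ∫⁻ t in Ioi (0:ℝ), ENNReal.ofReal (1 - F (t₀ + t)) := by
    rw [lintegral_eq_lintegral_meas_lt _ (((ae_restrict_iff' measurableSet_Ioo).2
      (Eventually.of_forall fun q hq => sub_nonneg.2 (hQge q hq).le))) hmeasQ]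
    refine setLIntegral_congr_fun measurableSet_Ioi (fun t ht => ?_)
    have ht' : (0:ℝ) < t := ht
    rw [Measure.restrict_apply' measurableSet_Ioo]
    have hset : {q : ℝ | t < Q q - t₀} ∩ Ioo p 1 = Ioo (F (t₀ + t)) 1 := by
      ext q
      simp only [mem_inter_iff, mem_setOf_eq, mem_Ioo]
      constructor
      · rintro ⟨h1, h2, h3⟩
        have hq' : q ∈ Ioo (0:ℝ) 1 := ⟨hp0.trans h2, h3⟩
        refine ⟨?_, h3⟩
        have : t₀ + t < Q q := by linarith
        exact (hiff q hq' (t₀ + t)).1 this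
      · rintro ⟨h1, h2⟩
        have hFp : p ≤ F (t₀ + t) := by
          rw [← hFt₀]; exact Fmono (by linarith)
        have hq0 : 0 < q := lt_of_le_of_lt (hp0.le.trans hFp) h1
        have hq' : q ∈ Ioo (0:ℝ) 1 := ⟨hq0, h2⟩
        have h4 : t₀ + t < Q q := (hiff q hq' (t₀ + t)).2 h1
        exact ⟨by linarith, ⟨lt_of_le_of_lt hFp h1, h2⟩⟩
    rw [hset, Real.volume_Ioo]
  have hfin : ∫⁻ ω, ENNReal.ofReal (max (W0 ω - t₀) 0) ∂P < ⊤ := intplus.lintegral_lt_top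
  have hfin2 : ∫⁻ q in Ioo p 1, ENNReal.ofReal (Q q - t₀) < ⊤ := by rw [C2, ← C1]; exact hfin
  have hnn : 0 ≤ᵐ[volume.restrict (Ioo p 1)] fun q => Q q - t₀ :=
    (ae_restrict_iff' measurableSet_Ioo).2
      (Eventually.of_forall fun q hq => sub_nonneg.2 (hQge q hq).le)
  have hQsubint : IntegrableOn (fun q => Q q - t₀) (Ioo p 1) volume := by
    refine ⟨hmeasQ.aestronglyMeasurable, ?_⟩
    rw [hasFiniteIntegral_iff_ofReal hnn]
    exact hfin2
  have hQint : IntegrableOn Q (Ioo p 1) volume := by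
    have : Q = fun q => (Q q - t₀) + t₀ := by funext q; ring
    rw [this]
    exact hQsubint.add (integrableOn_const measure_Ioo_lt_top.ne)
  refine ⟨hQint, ?_⟩
  have v1 : ∫ ω, max (W0 ω - t₀) 0 ∂P
      = (∫⁻ ω, ENNReal.ofReal (max (W0 ω - t₀) 0) ∂P).toReal :=
    integral_eq_lintegral_of_nonneg_ae (Eventually.of_forall fun ω => le_max_right _ _)
      intplus.aestronglyMeasurable
  have v2 : ∫ q in Ioo p 1, (Q q - t₀) = (∫⁻ q in Ioo p 1, ENNReal.ofReal (Q q - t₀)).toReal :=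
    integral_eq_lintegral_of_nonneg_ae hnn hmeasQ.aestronglyMeasurable
  have veq : ∫ q in Ioo p 1, (Q q - t₀) = ∫ ω, max (W0 ω - t₀) 0 ∂P := by
    rw [v1, v2, C2, ← C1]
  have hsplit : ∫ q in Ioo p 1, Q q = (∫ q in Ioo p 1, (Q q - t₀)) + (1 - p) * t₀ := by
    have : ∫ q in Ioo p 1, Q q = ∫ q in Ioo p 1, ((Q q - t₀) + t₀) := by
      refine setIntegral_congr_fun measurableSet_Ioo fun q hq => by ring
    rw [this, integral_add hQsubint (integrableOn_const measure_Ioo_lt_top.ne)]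
    congr 1
    rw [setIntegral_const, measureReal_def, Real.volume_Ioo, smul_eq_mul]
    rw [ENNReal.toReal_ofReal (by linarith)]
  have hIoc : ∫ q in p..(1:ℝ), Q q = ∫ q in Ioo p 1, Q q := by
    rw [intervalIntegral.integral_of_le hp1.le, integral_Ioc_eq_integral_Ioo]
  rw [hIoc, hsplit, veq]

lemma phi_ge {Ω : Type*} [MeasurableSpace Ω] (P : Measure Ω) [IsProbabilityMeasure P]
    (W0 : Ω → ℝ) (hm : Measurable W0) (hint : Integrable W0 P)
    (t₀ : ℝ) (p : ℝ) (hp1 : p < 1)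
    (htail : P (W0 ⁻¹' Ioi t₀) = ENNReal.ofReal (1 - p)) (t : ℝ) :
    t₀ + (1 - p)⁻¹ * (∫ ω, max (W0 ω - t₀) 0 ∂P)
      ≤ t + (1 - p)⁻¹ * (∫ ω, max (W0 ω - t) 0 ∂P) := by
  have h1p : (0:ℝ) < 1 - p := by linarith
  have intplus : ∀ s : ℝ, Integrable (fun ω => max (W0 ω - s) 0) P := fun s =>
    (hint.sub (integrable_const s)).pos_part
  set I : Ω → ℝ := (W0 ⁻¹' Ioi t₀).indicator (fun _ => (1:ℝ)) with hI
  have hImeas : MeasurableSet (W0 ⁻¹' Ioi t₀) := hm measurableSet_Ioi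
  have hIint : Integrable I P := (integrable_const (1:ℝ)).indicator hImeas
  have hIval : ∫ ω, I ω ∂P = 1 - p := by
    rw [hI, integral_indicator_const _ hImeas, measureReal_def, htail, smul_eq_mul, mul_one,
      ENNReal.toReal_ofReal h1p.le]
  have hpt : ∀ ω, max (W0 ω - t₀) 0 - (t - t₀) * I ω ≤ max (W0 ω - t) 0 := by
    intro ω
    rw [hI]
    by_cases h : t₀ < W0 ω
    · simp only [indicator_of_mem, mem_preimage, mem_Ioi, h, mul_one]
      have h0 : max (W0 ω - t₀) 0 = W0 ω - t₀ := max_eq_left (by linarith)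
      rw [h0]
      have : W0 ω - t ≤ max (W0 ω - t) 0 := le_max_left _ _
      linarith
    · have hmem : ω ∉ W0 ⁻¹' Ioi t₀ := by simpa using h
      simp only [indicator_of_notMem hmem, mul_zero, sub_zero]
      have h0 : max (W0 ω - t₀) 0 = 0 := max_eq_right (by simp at h; linarith)
      rw [h0]
      exact le_max_right _ _
  have hmono : ∫ ω, (max (W0 ω - t₀) 0 - (t - t₀) * I ω) ∂P ≤ ∫ ω, max (W0 ω - t) 0 ∂P :=
    integral_mono ((intplus t₀).sub (hIint.const_mul _)) (intplus t) hpt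
  rw [integral_sub (intplus t₀) (hIint.const_mul _), MeasureTheory.integral_const_mul,
    hIval] at hmono
  have := mul_le_mul_of_nonneg_left hmono (le_of_lt (inv_pos.2 h1p))
  have hcancel : (1 - p)⁻¹ * ((t - t₀) * (1 - p)) = t - t₀ := by
    field_simp
  nlinarith [this, mul_sub ((1-p)⁻¹) (∫ ω, max (W0 ω - t₀) 0 ∂P) ((t - t₀) * (1 - p))]

lemma lln_comp {Ω : Type*} [MeasurableSpace Ω] {P : Measure Ω} (W : ℕ → Ω → ℝ)
    (hindep : iIndepFun W P)
    (hident : ∀ i, IdentDistrib (W i) (W 0) P P)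
    (g : ℝ → ℝ) (hg : Measurable g) (hint : Integrable (fun ω => g (W 0 ω)) P) :
    ∀ᵐ ω ∂P, Tendsto (fun n : ℕ => (∑ i ∈ Finset.range n, g (W i ω)) / n) atTop
      (𝓝 (∫ ω, g (W 0 ω) ∂P)) := by
  have := strong_law_ae_real (fun i ω => g (W i ω)) hint
    (fun i j hij => (hindep.indepFun hij).comp hg hg)
    (fun i => (hident i).comp hg)
  exact this

lemma grid_cover (Δ : ℝ) :
    ∀ (J : ℕ) (a t : ℝ), 1 ≤ J → a ≤ t → t ≤ a + J * Δ →
      ∃ j : ℕ, j < J ∧ a + j * Δ ≤ t ∧ t ≤ a + j * Δ + Δ := by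
  intro J
  induction J with
  | zero => intro a t h; omega
  | succ J ih =>
      intro a t _ hat htJ
      by_cases h : t ≤ a + Δ
      · exact ⟨0, Nat.succ_pos J, by simpa using hat, by simpa using h⟩
      · push_neg at h
        rcases Nat.eq_zero_or_pos J with rfl | hJ
        · simp at htJ; linarith
        obtain ⟨j, hjJ, h1, h2⟩ := ih (a + Δ) t hJ h.le
          (by push_cast at htJ ⊢; linarith)
        exact ⟨j + 1, by omega, by push_cast at h1 ⊢; linarith,
          by push_cast at h2 ⊢; linarith⟩

lemma ceil_div_tendsto (p : ℝ) (hp0 : 0 < p) :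
    Tendsto (fun n : ℕ => ((⌈(n:ℝ) * p⌉₊ : ℝ) / n)) atTop (𝓝 p) := by
  have h1 : Tendsto (fun n : ℕ => p + 1 / (n:ℝ)) atTop (𝓝 (p + 0)) :=
    tendsto_const_nhds.add (tendsto_one_div_atTop_nhds_zero_nat)
  rw [add_zero] at h1
  refine tendsto_of_tendsto_of_tendsto_of_le_of_le' tendsto_const_nhds h1 ?_ ?_
  · filter_upwards [eventually_ge_atTop 1] with n hn
    have hn' : (0:ℝ) < n := by exact_mod_cast hn
    rw [le_div_iff₀ hn']
    calc p * n = (n:ℝ) * p := by ring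
    _ ≤ (⌈(n:ℝ) * p⌉₊ : ℝ) := Nat.le_ceil _
  · filter_upwards [eventually_ge_atTop 1] with n hn
    have hn' : (0:ℝ) < n := by exact_mod_cast hn
    rw [div_le_iff₀ hn']
    have := Nat.ceil_lt_add_one (by positivity : (0:ℝ) ≤ (n:ℝ) * p)
    calc (⌈(n:ℝ) * p⌉₊ : ℝ) ≤ (n:ℝ) * p + 1 := this.le
    _ = (p + 1/n) * n := by field_simp

lemma klt_eventually (p : ℝ) (hp0 : 0 < p) (hp1 : p < 1) :
    ∀ᶠ n : ℕ in atTop, (⌈(n:ℝ) * p⌉₊ : ℝ) < n ∧ ⌈(n:ℝ) * p⌉₊ < n := by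
  have h : Tendsto (fun n : ℕ => (n:ℝ) * (1 - p)) atTop atTop :=
    Tendsto.atTop_mul_const (by linarith) tendsto_natCast_atTop_atTop
  filter_upwards [h.eventually_gt_atTop 1, eventually_ge_atTop 1] with n hn hn1
  have h2 : (⌈(n:ℝ) * p⌉₊ : ℝ) < (n:ℝ) * p + 1 :=
    Nat.ceil_lt_add_one (by positivity)
  have h3 : (n:ℝ) * p + 1 < n := by nlinarith
  have h4 : (⌈(n:ℝ) * p⌉₊ : ℝ) < n := by linarith
  exact ⟨h4, by exact_mod_cast h4⟩

lemma ratio_tendsto (p : ℝ) (hp0 : 0 < p) (hp1 : p < 1) :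
    Tendsto (fun n : ℕ => ((n:ℝ) / ((n:ℝ) - (⌈(n:ℝ) * p⌉₊ : ℝ)))) atTop (𝓝 (1/(1-p))) := by
  have h1 : Tendsto (fun n : ℕ => 1 - (⌈(n:ℝ) * p⌉₊ : ℝ) / n) atTop (𝓝 (1 - p)) :=
    tendsto_const_nhds.sub (ceil_div_tendsto p hp0)
  have h2 : Tendsto (fun n : ℕ => (1 - (⌈(n:ℝ) * p⌉₊ : ℝ) / n)⁻¹) atTop (𝓝 ((1-p)⁻¹)) :=
    h1.inv₀ (by intro h; rw [sub_eq_zero] at h; linarith)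
  rw [one_div]
  refine h2.congr' ?_
  filter_upwards [eventually_ge_atTop 1, klt_eventually p hp0 hp1] with n hn hk
  have hn' : (0:ℝ) < n := by exact_mod_cast hn
  have hd : (0:ℝ) < (n:ℝ) - (⌈(n:ℝ) * p⌉₊ : ℝ) := by linarith [hk.1]
  rw [show (1 : ℝ) - (⌈(n:ℝ) * p⌉₊ : ℝ) / n = ((n:ℝ) - (⌈(n:ℝ) * p⌉₊ : ℝ)) / n by
    field_simp, inv_div]

end Aux

set_option maxHeartbeats 1600000 in
/-- **Consistency of the heavily trimmed upper mean.**
Under (A1)–(A2), for every fixed `p ∈ (0,1)`,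
`(1/(n − ⌈np⌉)) ∑_{i=⌈np⌉+1}^n W_{(i)} →ᴾ μ_u(p) = (1/(1−p))∫_p^1 F⁻¹(q) dq`. -/
theorem trimmed_upper_mean_tendsto_in_probability
    {Ω : Type*} [MeasurableSpace Ω] (P : Measure Ω) [IsProbabilityMeasure P]
    (W : ℕ → Ω → ℝ) (hmeas : ∀ i, Measurable (W i))
    (hindep : iIndepFun W P)
    (hident : ∀ i, IdentDistrib (W i) (W 0) P P)
    (F f Q : ℝ → ℝ)
    (hcdf : ∀ x, F x = (P (W 0 ⁻¹' Iic x)).toReal)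
    (hdensity : P.map (W 0) = volume.withDensity (fun x => ENNReal.ofReal (f x)))
    (hQ : ∀ p ∈ Ioo (0 : ℝ) 1, F (Q p) = p ∧ ∀ y, F y = p → y = Q p)
    (hL2 : MemLp (W 0) 2 P)
    (p : ℝ) (hp : p ∈ Ioo (0 : ℝ) 1) :
    TendstoInMeasure P
      (fun (n : ℕ) ω => (1 / ((n : ℝ) - (⌈(n : ℝ) * p⌉₊ : ℝ))) *
        ∑ i ∈ Finset.Icc (⌈(n : ℝ) * p⌉₊ + 1) n, orderStat W n i ω)
      atTop
      (fun _ => (1 / (1 - p)) * (∫ q in p..(1 : ℝ), Q q)) := by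
  obtain ⟨hp0, hp1⟩ := hp
  have h1p : (0:ℝ) < 1 - p := by linarith
  have hW0int : Integrable (W 0) P := hL2.integrable one_le_two
  obtain ⟨-, hQval⟩ := quantile_integral P (W 0) (hmeas 0) F Q hcdf hQ hW0int p ⟨hp0, hp1⟩
  set t₀ : ℝ := Q p with ht₀
  set μ : ℝ := (1 / (1 - p)) * ∫ q in p..(1:ℝ), Q q with hμdef
  set E : ℝ → ℝ := fun t => ∫ ω, max (W 0 ω - t) 0 ∂P with hE
  have hμ' : μ = t₀ + (1 - p)⁻¹ * E t₀ := by
    rw [hμdef, hQval, hE]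
    field_simp
    ring
  have hFt₀ : F t₀ = p := (hQ p ⟨hp0, hp1⟩).1
  have htail : P (W 0 ⁻¹' Ioi t₀) = ENNReal.ofReal (1 - p) := by
    rw [tailP P (W 0) (hmeas 0) F hcdf t₀, hFt₀]
  have hphi : ∀ t, μ ≤ t + (1-p)⁻¹ * E t := by
    intro t; rw [hμ']; exact phi_ge P (W 0) (hmeas 0) hW0int t₀ p hp1 htail t
  have intplus : ∀ t : ℝ, Integrable (fun ω => max (W 0 ω - t) 0) P := fun t =>
    (hW0int.sub (integrable_const t)).pos_part
  have hgmeas : ∀ t : ℝ, Measurable (fun x : ℝ => max (x - t) 0) := fun t =>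
    (measurable_id.sub measurable_const).max measurable_const
  have llnQ : ∀ᵐ ω ∂P, ∀ r : ℚ, Tendsto
      (fun n : ℕ => (∑ i ∈ Finset.range n, max (W i ω - (r:ℝ)) 0)/n) atTop (𝓝 (E (r:ℝ))) :=
    ae_all_iff.2 fun r => lln_comp W hindep hident (fun x => max (x - (r:ℝ)) 0)
      (hgmeas _) (intplus _)
  have lln0 : ∀ᵐ ω ∂P, Tendsto
      (fun n : ℕ => (∑ i ∈ Finset.range n, max (W i ω - t₀) 0)/n) atTop (𝓝 (E t₀)) :=
    lln_comp W hindep hident (fun x => max (x - t₀) 0) (hgmeas _) (intplus _)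
  have llnW : ∀ᵐ ω ∂P, Tendsto
      (fun n : ℕ => (∑ i ∈ Finset.range n, W i ω)/n) atTop (𝓝 (∫ ω, W 0 ω ∂P)) :=
    lln_comp W hindep hident (fun x => x) measurable_id hW0int
  set EW : ℝ := ∫ ω, W 0 ω ∂P with hEW
  have hr := ratio_tendsto p hp0 hp1
  have hklt := klt_eventually p hp0 hp1
  have key : ∀ᵐ ω ∂P, Tendsto (fun n : ℕ => (1 / ((n : ℝ) - (⌈(n : ℝ) * p⌉₊ : ℝ))) *
      ∑ i ∈ Finset.Icc (⌈(n : ℝ) * p⌉₊ + 1) n, orderStat W n i ω) atTop (𝓝 μ) := by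
    filter_upwards [llnQ, lln0, llnW] with ω hQr h0 hWm
    rw [Metric.tendsto_nhds]
    intro ε hε
    -- choose constants
    obtain ⟨t2, ht2⟩ := exists_rat_gt μ
    obtain ⟨t1, ht1⟩ := exists_rat_lt (min ((EW - (μ+1)*(1-p))/p) t2)
    have ht1a : (t1:ℝ) < t2 := lt_of_lt_of_le ht1 (min_le_right _ _)
    have ht1b : (t1:ℝ) < (EW - (μ+1)*(1-p))/p := lt_of_lt_of_le ht1 (min_le_left _ _)
    obtain ⟨c', hc'⟩ : ∃ c : ℝ, c = 1/(1-p) + 1 := ⟨_, rfl⟩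
    have hc'pos : (0:ℝ) < c' := by rw [hc']; positivity
    obtain ⟨δ, hδ0, hδε⟩ := exists_rat_btwn (show (0:ℝ) < ε/(2*c') by positivity)
    have hδ0' : (0:ℚ) < δ := by exact_mod_cast hδ0
    set J : ℕ := ⌈(t2 - t1)/δ⌉₊ with hJdef
    have hJ1 : 1 ≤ J := Nat.one_le_ceil_iff.2 (by
      apply div_pos _ hδ0'
      exact_mod_cast sub_pos.2 (by exact_mod_cast ht1a))
    have hJcov : (t2:ℝ) ≤ (t1:ℝ) + J * δ := by
      have h5 : ((t2 - t1)/δ : ℚ) ≤ (J:ℚ) := Nat.le_ceil _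
      have h6 : (t2 - t1 : ℚ) ≤ (J:ℚ) * δ := (div_le_iff₀ hδ0').1 h5
      have h7 : ((t2:ℝ) - t1) ≤ (J:ℝ) * δ := by exact_mod_cast h6
      linarith
    -- eventual facts
    have hlimu : Tendsto (fun n : ℕ => t₀ + ((n:ℝ) / ((n:ℝ) - (⌈(n:ℝ) * p⌉₊ : ℝ))) *
        ((∑ i ∈ Finset.range n, max (W i ω - t₀) 0)/n)) atTop (𝓝 μ) := by
      have hμeq : t₀ + (1/(1-p)) * E t₀ = μ := by rw [hμ', one_div]
      rw [← hμeq]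
      exact tendsto_const_nhds.add (hr.mul h0)
    have ev_upper : ∀ᶠ n : ℕ in atTop, t₀ + ((n:ℝ) / ((n:ℝ) - (⌈(n:ℝ) * p⌉₊ : ℝ))) *
        ((∑ i ∈ Finset.range n, max (W i ω - t₀) 0)/n) < μ + ε :=
      Tendsto.eventually_lt_const (by linarith) hlimu
    have ev_r1 : ∀ᶠ n : ℕ in atTop,
        1 < ((n:ℝ) / ((n:ℝ) - (⌈(n:ℝ) * p⌉₊ : ℝ))) := by
      refine Tendsto.eventually_const_lt ?_ hr
      rw [lt_div_iff₀ h1p]; linarith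
    have ev_rc : ∀ᶠ n : ℕ in atTop,
        ((n:ℝ) / ((n:ℝ) - (⌈(n:ℝ) * p⌉₊ : ℝ))) < c' := by
      refine Tendsto.eventually_lt_const (by rw [hc']; linarith) hr
    have ev_grid : ∀ᶠ n : ℕ in atTop, ∀ j ∈ Finset.range J,
        μ - ε/2 < ((t1:ℝ) + j * δ) + ((n:ℝ) / ((n:ℝ) - (⌈(n:ℝ) * p⌉₊ : ℝ))) *
          ((∑ i ∈ Finset.range n, max (W i ω - ((t1:ℝ) + j * δ)) 0)/n) := by
      rw [Finset.eventually_all]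
      intro j _
      have hcast : (((t1 + (j:ℚ) * δ : ℚ)):ℝ) = (t1:ℝ) + j * δ := by push_cast; ring
      have hlim := hQr (t1 + (j:ℚ) * δ)
      rw [hcast] at hlim
      refine Tendsto.eventually_const_lt ?_ (tendsto_const_nhds.add (hr.mul hlim))
      have := hphi ((t1:ℝ) + j * δ)
      rw [one_div]
      linarith
    have ev_left : ∀ᶠ n : ℕ in atTop,
        μ - ε < ((n:ℝ) / ((n:ℝ) - (⌈(n:ℝ) * p⌉₊ : ℝ))) * ((∑ i ∈ Finset.range n, W i ω)/n)
          - (t1:ℝ) * (((n:ℝ) / ((n:ℝ) - (⌈(n:ℝ) * p⌉₊ : ℝ))) - 1) := by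
      refine Tendsto.eventually_const_lt ?_
        ((hr.mul hWm).sub (tendsto_const_nhds.mul (hr.sub tendsto_const_nhds)))
      have h5 : (t1:ℝ) * p < EW - (μ+1)*(1-p) := (lt_div_iff₀ hp0).1 ht1b
      have hre : (1/(1-p))*EW - (t1:ℝ)*((1/(1-p)) - 1) = (EW - t1*p)/(1-p) := by
        field_simp
        ring
      rw [hre, lt_div_iff₀ h1p]
      have h6 : (μ - ε)*(1-p) < (μ+1)*(1-p) := by
        apply mul_lt_mul_of_pos_right _ h1p
        linarith
      linarith [h5, h6]
    filter_upwards [hklt, ev_upper, ev_r1, ev_rc, ev_grid, ev_left, eventually_ge_atTop 1]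
      with n hk hub hr1 hrc hgrid hleft hn1
    set k : ℕ := ⌈(n:ℝ) * p⌉₊ with hkdef
    have hkn : k < n := hk.2
    have hD : (0:ℝ) < (n:ℝ) - k := by linarith [hk.1]
    have hn0 : (0:ℝ) < n := by exact_mod_cast hn1
    set l : List ℝ := List.ofFn (fun j : Fin n => W j ω) with hl
    have hlen : l.length = n := List.length_ofFn
    have hreidx : ∑ i ∈ Finset.Icc (k+1) n, orderStat W n i ω =
        ∑ j ∈ Finset.Ico k n, (List.insertionSort (· ≤ ·) l).getD j 0 :=
      trim_reindex W n k ω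
    have hcast : ((n - k : ℕ) : ℝ) = (n:ℝ) - k := by
      rw [Nat.cast_sub hkn.le]
    have halg : ∀ τ S' : ℝ, (1/((n:ℝ)-k)) * (((n:ℝ)-k) * τ + S')
        = τ + ((n:ℝ)/((n:ℝ)-k)) * (S'/(n:ℝ)) := by
      intro τ S'
      field_simp
    -- upper bound
    have hub1 := trimsum_le l k t₀
    rw [hlen, ofFn_map_sum (fun j' => W j' ω) (fun x => max (x - t₀) 0), hcast] at hub1
    have hXle : (1/((n:ℝ)-k)) * ∑ i ∈ Finset.Icc (k+1) n, orderStat W n i ω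
        ≤ t₀ + ((n:ℝ)/((n:ℝ)-k)) * ((∑ i ∈ Finset.range n, max (W i ω - t₀) 0)/n) := by
      rw [hreidx, ← halg]
      exact mul_le_mul_of_nonneg_left hub1 (by positivity)
    -- lower bound
    have heq := trimsum_eq l k (by omega)
    rw [hlen] at heq
    set τ : ℝ := (List.insertionSort (· ≤ ·) l).getD k 0 with hτdef
    rw [ofFn_map_sum (fun j' => W j' ω) (fun x => max (x - τ) 0), hcast] at heq
    have hXeq : (1/((n:ℝ)-k)) * ∑ i ∈ Finset.Icc (k+1) n, orderStat W n i ω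
        = τ + ((n:ℝ)/((n:ℝ)-k)) * ((∑ i ∈ Finset.range n, max (W i ω - τ) 0)/n) := by
      rw [hreidx, heq, halg]
    set r : ℝ := (n:ℝ)/((n:ℝ)-k) with hrdef
    set X : ℝ := (1/((n:ℝ)-k)) * ∑ i ∈ Finset.Icc (k+1) n, orderStat W n i ω with hX
    clear_value X
    have hr0 : (0:ℝ) < r := lt_trans one_pos hr1
    have hXlow : μ - ε < X := by
      rcases le_total τ (t1:ℝ) with hτ1 | hτ1
      · -- far left region
        have hsum : ∑ i ∈ Finset.range n, (W i ω - τ)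
            ≤ ∑ i ∈ Finset.range n, max (W i ω - τ) 0 :=
          Finset.sum_le_sum fun i _ => le_max_left _ _
        rw [Finset.sum_sub_distrib, Finset.sum_const, Finset.card_range, nsmul_eq_mul] at hsum
        have h7 : (∑ i ∈ Finset.range n, W i ω)/n - τ
            = (∑ i ∈ Finset.range n, W i ω - (n:ℝ)*τ)/n := by field_simp
        have hM : (∑ i ∈ Finset.range n, W i ω)/n - τ
            ≤ (∑ i ∈ Finset.range n, max (W i ω - τ) 0)/n := by
          rw [h7, div_le_div_iff₀ hn0 hn0]
          exact mul_le_mul_of_nonneg_right hsum hn0.le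
        have h8 : r * ((∑ i ∈ Finset.range n, W i ω)/n - τ)
            ≤ r * ((∑ i ∈ Finset.range n, max (W i ω - τ) 0)/n) :=
          mul_le_mul_of_nonneg_left hM hr0.le
        have h9 : - (τ * (r - 1)) ≥ - ((t1:ℝ) * (r - 1)) := by
          have := mul_le_mul_of_nonneg_right hτ1 (by linarith : (0:ℝ) ≤ r - 1)
          linarith
        have hid : τ + r * ((∑ i ∈ Finset.range n, W i ω)/n - τ)
            = r * ((∑ i ∈ Finset.range n, W i ω)/n) - τ * (r - 1) := by ring
        rw [hXeq]
        linarith [hleft, h8, h9, hid]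
      · rcases le_total τ (t2:ℝ) with hτ2 | hτ2
        · -- middle region: grid
          obtain ⟨j, hjJ, hq1, hq2⟩ := grid_cover (δ:ℝ) J (t1:ℝ) τ hJ1 hτ1
            (le_trans hτ2 hJcov)
          set q : ℝ := (t1:ℝ) + j * δ with hq
          have hgj := hgrid j (Finset.mem_range.2 hjJ)
          rw [← hq] at hgj
          clear_value q
          -- Mn τ ≥ Mn q - (τ - q)
          have hsum : ∑ i ∈ Finset.range n, (max (W i ω - q) 0 - (τ - q))
              ≤ ∑ i ∈ Finset.range n, max (W i ω - τ) 0 := by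
            refine Finset.sum_le_sum fun i _ => ?_
            rcases le_total (W i ω) q with hc | hc
            · have : max (W i ω - q) 0 = 0 := max_eq_right (by linarith)
              rw [this]
              have := le_max_right (W i ω - τ) 0
              linarith
            · have : max (W i ω - q) 0 = W i ω - q := max_eq_left (by linarith)
              rw [this]
              have := le_max_left (W i ω - τ) 0
              linarith
          rw [Finset.sum_sub_distrib, Finset.sum_const, Finset.card_range, nsmul_eq_mul] at hsum
          have h7 : (∑ i ∈ Finset.range n, max (W i ω - q) 0)/n - (τ - q)
              = (∑ i ∈ Finset.range n, max (W i ω - q) 0 - (n:ℝ)*(τ - q))/n := by field_simp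
          have hM : (∑ i ∈ Finset.range n, max (W i ω - q) 0)/n - (τ - q)
              ≤ (∑ i ∈ Finset.range n, max (W i ω - τ) 0)/n := by
            rw [h7, div_le_div_iff₀ hn0 hn0]
            exact mul_le_mul_of_nonneg_right hsum hn0.le
          have h8 : r * ((∑ i ∈ Finset.range n, max (W i ω - q) 0)/n - (τ - q))
              ≤ r * ((∑ i ∈ Finset.range n, max (W i ω - τ) 0)/n) :=
            mul_le_mul_of_nonneg_left hM hr0.le
          have h9 : (τ - q) * (r - 1) ≤ (δ:ℝ) * c' := by
            refine mul_le_mul (by linarith) (by linarith) (by linarith) (by linarith)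
          have h10 : (δ:ℝ) * c' < ε/2 := by
            have h11 := (lt_div_iff₀ (by positivity : (0:ℝ) < 2*c')).1 hδε
            have h12 : (δ:ℝ) * (2*c') = 2*((δ:ℝ)*c') := by ring
            linarith
          have hid : τ + r * ((∑ i ∈ Finset.range n, max (W i ω - q) 0)/n - (τ - q))
              = (q + r * ((∑ i ∈ Finset.range n, max (W i ω - q) 0)/n))
                - (τ - q) * (r - 1) := by ring
          rw [hXeq]
          linarith [hgj, h8, h9, h10, hid]
        · -- far right region
          have hM0 : (0:ℝ) ≤ (∑ i ∈ Finset.range n, max (W i ω - τ) 0)/n := by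
            apply div_nonneg _ hn0.le
            exact Finset.sum_nonneg fun i _ => le_max_right _ _
          have h8 : 0 ≤ r * ((∑ i ∈ Finset.range n, max (W i ω - τ) 0)/n) :=
            mul_nonneg hr0.le hM0
          rw [hXeq]
          linarith
    have hXhigh : X < μ + ε := lt_of_le_of_lt hXle hub
    rw [Real.dist_eq, abs_sub_lt_iff]
    constructor
    · linarith
    · linarith
  -- measurability
  have hmeasX : ∀ n : ℕ, AEStronglyMeasurable
      (fun ω => (1 / ((n : ℝ) - (⌈(n : ℝ) * p⌉₊ : ℝ))) *
        ∑ i ∈ Finset.Icc (⌈(n : ℝ) * p⌉₊ + 1) n, orderStat W n i ω) P := by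
    intro n
    set k : ℕ := ⌈(n:ℝ) * p⌉₊ with hkdef
    by_cases hkn : k < n
    · have : (fun ω => (1 / ((n : ℝ) - (k : ℝ))) *
          ∑ i ∈ Finset.Icc (k + 1) n, orderStat W n i ω)
          = fun ω => (1 / ((n : ℝ) - (k : ℝ))) * ∑ j ∈ Finset.Ico k n,
            (List.insertionSort (· ≤ ·) (List.ofFn fun j : Fin n => W j ω)).getD j 0 := by
        funext ω
        rw [trim_reindex W n k ω]
      rw [this]
      exact (measurable_const.mul (measurable_trimsum W hmeas n k hkn)).aestronglyMeasurable
    · have : (fun ω => (1 / ((n : ℝ) - (k : ℝ))) *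
          ∑ i ∈ Finset.Icc (k + 1) n, orderStat W n i ω) = fun _ => (0:ℝ) := by
        funext ω
        rw [Finset.Icc_eq_empty (by omega), Finset.sum_empty, mul_zero]
      rw [this]
      exact aestronglyMeasurable_const
  exact tendstoInMeasure_of_tendsto_ae hmeasX key
end

section
/- Let 0 < p < 1 and set r_n = (1/n)∑_{i=1}^n 𝟙{W_i ≤ F^{-1}(p)}. Then the boundary block of centered order statistics between the random index ⌈n r_n⌉ and the deterministic index ⌈np⌉ is negligible at the √n scale: (√n/⌈np⌉) | ∑_{i=⌈n r_n⌉+1}^{⌈np⌉} (W_{(i)} − F^{-1}(p)) | →^P 0 as n → ∞ (with the convention that when ⌈n r_n⌉ + 1 > ⌈np⌉ the limits of summation are interchanged and the sum carries a negative sign). -/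
open MeasureTheory ProbabilityTheory Filter Set
open scoped Topology

/-- The sum `∑_{i=a+1}^{b} h i`, with the convention that when `a + 1 > b` the limits of
summation are interchanged and the sum carries a negative sign. -/
noncomputable def signedBlockSum (h : ℕ → ℝ) (a b : ℕ) : ℝ :=
  if a ≤ b then ∑ i ∈ Finset.Icc (a + 1) b, h i else -∑ i ∈ Finset.Icc (b + 1) a, h i

/-! ### Auxiliary lemmas -/

section Aux

set_option linter.unnecessarySeqFocus false

/-- Chebyshev-type bound for sums of indicator random variables of i.i.d. variables. -/
lemma indicator_cheb
    {Ω : Type*} [MeasurableSpace Ω] (P : Measure Ω) [IsProbabilityMeasure P]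
    (W : ℕ → Ω → ℝ) (hmeas : ∀ i, Measurable (W i))
    (hindep : iIndepFun W P)
    (hident : ∀ i, IdentDistrib (W i) (W 0) P P)
    (t : ℝ) (n : ℕ) (c : ℝ) (hc : 0 < c) :
    P {ω | c ≤ |(∑ i ∈ Finset.range n, if W i ω ≤ t then (1:ℝ) else 0)
        - n * (P (W 0 ⁻¹' Iic t)).toReal|}
      ≤ ENNReal.ofReal (n / c ^ 2) := by
  classical
  set g : ℝ → ℝ := fun x => if x ≤ t then 1 else 0 with hg
  have hgmeas : Measurable g :=
    Measurable.ite (measurableSet_Iic : MeasurableSet {x : ℝ | x ≤ t}) measurable_const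
      measurable_const
  set Y : ℕ → Ω → ℝ := fun i ω => g (W i ω) with hY
  have hYmeas : ∀ i, Measurable (Y i) := fun i => hgmeas.comp (hmeas i)
  have hYbd : ∀ i ω, ‖Y i ω‖ ≤ 1 := by
    intro i ω; simp only [Y, g]; split <;> simp
  have hYmem : ∀ i, MemLp (Y i) 2 P := fun i =>
    MemLp.of_bound (hYmeas i).aestronglyMeasurable 1 (Filter.Eventually.of_forall (hYbd i))
  have hYindep : iIndepFun Y P :=
    hindep.comp (fun _ => g) (fun _ => hgmeas)
  have hYint : ∀ i, ∫ ω, Y i ω ∂P = (P (W 0 ⁻¹' Iic t)).toReal := by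
    intro i
    have h1 : Y i = Set.indicator (W i ⁻¹' Iic t) (fun _ => (1:ℝ)) := by
      ext ω
      simp only [Y, g, Set.indicator_apply, Set.mem_preimage, Set.mem_Iic]
    rw [h1, integral_indicator_const _ ((measurableSet_Iic).preimage (hmeas i))]
    rw [measureReal_def, (hident i).measure_mem_eq measurableSet_Iic]
    simp
  have hYvar : ∀ i, variance (Y i) P ≤ 1 := by
    intro i
    refine (variance_le_expectation_sq (hYmeas i).aestronglyMeasurable).trans ?_
    have : ∀ ω, (Y i ω) ^ 2 ≤ 1 := by
      intro ω; simp only [Y, g]; split <;> norm_num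
    calc ∫ ω, (Y i ω) ^ 2 ∂P ≤ ∫ _ω, (1:ℝ) ∂P := by
          apply integral_mono_of_nonneg (Filter.Eventually.of_forall fun ω => sq_nonneg _)
            (integrable_const 1) (Filter.Eventually.of_forall this)
      _ = 1 := by simp
  set S : Ω → ℝ := fun ω => ∑ i ∈ Finset.range n, Y i ω with hS
  have hSmem : MemLp S 2 P := by
    have : S = ∑ i ∈ Finset.range n, Y i := by ext ω; simp [S]
    rw [this]; exact memLp_finset_sum' _ (fun i _ => hYmem i)
  have hSmean : ∫ ω, S ω ∂P = n * (P (W 0 ⁻¹' Iic t)).toReal := by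
    rw [hS]
    rw [integral_finset_sum _ (fun i _ => (hYmem i).integrable one_le_two)]
    simp [hYint]
  have hSvar : variance S P ≤ n := by
    have h1 : S = ∑ i ∈ Finset.range n, Y i := by ext ω; simp [S]
    rw [h1, IndepFun.variance_sum (fun i _ => hYmem i)
      (fun i _ j _ hij => hYindep.indepFun hij)]
    calc ∑ i ∈ Finset.range n, variance (Y i) P ≤ ∑ i ∈ Finset.range n, (1:ℝ) :=
          Finset.sum_le_sum (fun i _ => hYvar i)
      _ = n := by simp
  have hcheb := meas_ge_le_variance_div_sq (μ := P) hSmem hc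
  rw [hSmean] at hcheb
  refine hcheb.trans (ENNReal.ofReal_le_ofReal ?_)
  exact div_le_div_of_nonneg_right hSvar (by positivity) |>.trans_eq rfl

/-- In a sorted list, the `i`-th entry is `≤ x` iff `i` is less than the count of
entries `≤ x`. -/
lemma sorted_getD_le_iff : ∀ (l : List ℝ), l.Pairwise (· ≤ ·) → ∀ (i : ℕ) (x : ℝ), i < l.length →
    (l.getD i 0 ≤ x ↔ i < l.countP (fun y => decide (y ≤ x))) := by
  intro l
  induction l with
  | nil => intro _ i x h; simp at h
  | cons a tl ih =>
    intro hs i x hi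
    rw [List.pairwise_cons] at hs
    have hcons : (a :: tl).countP (fun y => decide (y ≤ x))
        = (if a ≤ x then 1 else 0) + tl.countP (fun y => decide (y ≤ x)) := by
      rw [List.countP_cons]
      split <;> simp_all <;> omega
    cases i with
    | zero =>
      simp only [List.getD_cons_zero, hcons]
      constructor
      · intro h; simp [h]
      · intro h
        by_contra hax
        have h0 : tl.countP (fun y => decide (y ≤ x)) = 0 := by
          rw [List.countP_eq_zero]
          intro y hy
          have := hs.1 y hy
          simp only [decide_eq_true_eq]
          intro hyx; exact hax (le_trans this hyx)
        simp [hax, h0] at h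
    | succ j =>
      simp only [List.getD_cons_succ, hcons]
      simp only [List.length_cons, Nat.succ_lt_succ_iff] at hi
      by_cases hax : a ≤ x
      · rw [ih hs.2 j x hi]
        simp [hax]; omega
      · constructor
        · intro h
          exfalso
          have hmem : tl.getD j 0 ∈ tl := by
            rw [List.getD_eq_getElem _ _ hi]
            exact List.getElem_mem hi
          exact hax (le_trans (hs.1 _ hmem) h)
        · intro h
          exfalso
          have h0 : tl.countP (fun y => decide (y ≤ x)) = 0 := by
            rw [List.countP_eq_zero]
            intro y hy
            simp only [decide_eq_true_eq]
            intro hyx; exact hax (le_trans (hs.1 y hy) hyx)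
          simp [hax, h0] at h

lemma countP_ofFn (n : ℕ) (g : ℕ → ℝ) (x : ℝ) :
    ((List.ofFn fun j : Fin n => g j).countP (fun y => decide (y ≤ x)))
      = ∑ j ∈ Finset.range n, if g j ≤ x then 1 else 0 := by
  induction n generalizing g with
  | zero => simp
  | succ m ih =>
    rw [List.ofFn_succ, List.countP_cons, Finset.sum_range_succ']
    have := ih (fun j => g (j + 1))
    simp only [Fin.val_succ] at *
    rw [this]
    by_cases hg0 : g 0 ≤ x <;> simp [hg0]

lemma abs_signedBlockSum_le (h : ℕ → ℝ) (a b : ℕ) (δ : ℝ)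
    (hδ : ∀ i ∈ Finset.Icc (min a b + 1) (max a b), |h i| ≤ δ) :
    |signedBlockSum h a b| ≤ ((max a b - min a b : ℕ) : ℝ) * δ := by
  have key : ∀ (u v : ℕ), u ≤ v → (∀ i ∈ Finset.Icc (u + 1) v, |h i| ≤ δ) →
      |∑ i ∈ Finset.Icc (u + 1) v, h i| ≤ ((v - u : ℕ) : ℝ) * δ := by
    intro u v huv hbd
    calc |∑ i ∈ Finset.Icc (u + 1) v, h i| ≤ ∑ i ∈ Finset.Icc (u + 1) v, |h i| :=
          Finset.abs_sum_le_sum_abs _ _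
      _ ≤ (Finset.Icc (u + 1) v).card • δ := Finset.sum_le_card_nsmul _ _ _ hbd
      _ = ((v - u : ℕ) : ℝ) * δ := by
          rw [Nat.card_Icc, nsmul_eq_mul]
          congr 2
          omega
  rcases le_or_gt a b with hab | hab
  · rw [signedBlockSum, if_pos hab]
    have := key a b hab (by simpa [min_eq_left hab, max_eq_right hab] using hδ)
    simpa [min_eq_left hab, max_eq_right hab] using this
  · rw [signedBlockSum, if_neg (not_le.mpr hab), abs_neg]
    have := key b a hab.le (by simpa [min_eq_right hab.le, max_eq_left hab.le] using hδ)
    simpa [min_eq_right hab.le, max_eq_left hab.le] using this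

lemma orderStat_le_iff {Ω : Type*} (W : ℕ → Ω → ℝ) (n i : ℕ) (ω : Ω) (t : ℝ)
    (hi : i - 1 < n) :
    orderStat W n i ω ≤ t ↔
      i - 1 < (List.ofFn fun j : Fin n => W j ω).countP (fun y => decide (y ≤ t)) := by
  set L := List.ofFn fun j : Fin n => W j ω with hL
  have hperm : (List.insertionSort (· ≤ ·) L).Perm L := List.perm_insertionSort _ _
  have hsort : (List.insertionSort (· ≤ ·) L).Pairwise (· ≤ ·) := List.pairwise_insertionSort _ _
  have hlen : (List.insertionSort (· ≤ ·) L).length = n := by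
    rw [hperm.length_eq, hL, List.length_ofFn]
  rw [orderStat, ← hL, sorted_getD_le_iff _ hsort _ t (by omega), hperm.countP_eq]

end Aux

set_option maxHeartbeats 2000000 in
/-- **The centered boundary block is negligible at the `√n` scale.**
With `r_n = (1/n)∑_{i=1}^n 𝟙{Wᵢ ≤ F⁻¹(p)}`,
`(√n/⌈np⌉) |∑_{i=⌈n rₙ⌉+1}^{⌈np⌉} (W_{(i)} − F⁻¹(p))| →ᴾ 0`. -/
theorem boundary_block_sqrt_negligible
    {Ω : Type*} [MeasurableSpace Ω] (P : Measure Ω) [IsProbabilityMeasure P]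
    (W : ℕ → Ω → ℝ) (hmeas : ∀ i, Measurable (W i))
    (hindep : iIndepFun W P)
    (hident : ∀ i, IdentDistrib (W i) (W 0) P P)
    (F f Q : ℝ → ℝ)
    (hcdf : ∀ x, F x = (P (W 0 ⁻¹' Iic x)).toReal)
    (hdensity : P.map (W 0) = volume.withDensity (fun x => ENNReal.ofReal (f x)))
    (hQ : ∀ p ∈ Ioo (0 : ℝ) 1, F (Q p) = p ∧ ∀ y, F y = p → y = Q p)
    (hL2 : MemLp (W 0) 2 P)
    (p : ℝ) (hp : p ∈ Ioo (0 : ℝ) 1) :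
    TendstoInMeasure P
      (fun (n : ℕ) ω =>
        (Real.sqrt n / (⌈(n : ℝ) * p⌉₊ : ℝ)) *
          |signedBlockSum (fun i => orderStat W n i ω - Q p)
            ⌈(n : ℝ) * ((1 / (n : ℝ)) *
              ∑ i ∈ Finset.range n, if W i ω ≤ Q p then (1 : ℝ) else 0)⌉₊
            ⌈(n : ℝ) * p⌉₊|)
      atTop (fun _ => (0 : ℝ)) := by
  classical
  obtain ⟨hp0, hp1⟩ := hp
  have hFQ : F (Q p) = p := (hQ p ⟨hp0, hp1⟩).1
  have hQuniq : ∀ y, F y = p → y = Q p := (hQ p ⟨hp0, hp1⟩).2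
  have hFmono : ∀ x y : ℝ, x ≤ y → F x ≤ F y := by
    intro x y hxy
    rw [hcdf, hcdf]
    exact ENNReal.toReal_mono (measure_ne_top _ _)
      (measure_mono (preimage_mono (Iic_subset_Iic.mpr hxy)))
  have cheb : ∀ (t : ℝ) (n : ℕ) (c : ℝ), 0 < c →
      P {ω | c ≤ |(∑ i ∈ Finset.range n, if W i ω ≤ t then (1:ℝ) else 0) - n * F t|}
        ≤ ENNReal.ofReal (n / c ^ 2) := by
    intro t n c hc
    have := indicator_cheb P W hmeas hindep hident t n c hc
    rw [hcdf t]
    exact this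
  rw [tendstoInMeasure_iff_dist]
  intro ε hε
  apply ENNReal.tendsto_nhds_zero.mpr
  intro η hη
  -- choose the constants
  have hηne : min η 1 ≠ ⊤ := (lt_of_le_of_lt (min_le_right _ _) ENNReal.one_lt_top).ne
  set u : ℝ := (min η 1).toReal with hu
  have hu_pos : 0 < u := ENNReal.toReal_pos (lt_min hη zero_lt_one).ne' hηne
  have hu_le : ENNReal.ofReal u ≤ η := by
    rw [hu, ENNReal.ofReal_toReal hηne]; exact min_le_left _ _
  set M : ℝ := Real.sqrt (3 / u) with hM
  have hMpos : 0 < M := Real.sqrt_pos.mpr (by positivity)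
  have hMsq : M ^ 2 = 3 / u := Real.sq_sqrt (by positivity)
  set δ : ℝ := ε * p / (2 * (M + 1)) with hδ
  have hδpos : 0 < δ := by positivity
  set pm : ℝ := F (Q p - δ) with hpm
  set pp : ℝ := F (Q p + δ) with hpp
  have hpm_lt : pm < p := by
    have h1 : pm ≤ p := by
      have := hFmono (Q p - δ) (Q p) (by linarith)
      rwa [hFQ] at this
    refine lt_of_le_of_ne h1 (fun h => ?_)
    have := hQuniq _ h
    linarith
  have hpp_gt : p < pp := by
    have h1 : p ≤ pp := by
      have := hFmono (Q p) (Q p + δ) (by linarith)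
      rwa [hFQ] at this
    refine lt_of_le_of_ne h1 (fun h => ?_)
    have := hQuniq _ h.symm
    linarith
  -- deterministic tendsto facts
  have htend : ∀ c : ℝ, 0 < c → Tendsto (fun n : ℕ => (n : ℝ) / ((n : ℝ) * c) ^ 2)
      atTop (𝓝 0) := by
    intro c hc
    have h := tendsto_one_div_atTop_nhds_zero_nat.mul_const (1 / c ^ 2)
    rw [zero_mul] at h
    apply Tendsto.congr' _ h
    filter_upwards [eventually_ge_atTop 1] with n hn
    have hn0 : (n : ℝ) ≠ 0 := by
      have : (1:ℝ) ≤ n := by exact_mod_cast hn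
      linarith
    field_simp
  have ev2 := (htend (p - pm) (by linarith)).eventually_lt_const
    (show (0:ℝ) < u / 3 by positivity)
  have ev3 := (htend (pp - p) (by linarith)).eventually_lt_const
    (show (0:ℝ) < u / 3 by positivity)
  filter_upwards [eventually_ge_atTop 1, ev2, ev3] with n hn1 hn2 hn3
  have hn0 : (0:ℝ) < n := by exact_mod_cast hn1
  have hsqrt_pos : 0 < Real.sqrt n := Real.sqrt_pos.mpr hn0
  -- the three bad events
  set B1 : Set Ω := {ω | M * Real.sqrt n ≤
      |(∑ i ∈ Finset.range n, if W i ω ≤ Q p then (1:ℝ) else 0) - n * F (Q p)|} with hB1def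
  set B2 : Set Ω := {ω | (n:ℝ) * (p - pm) ≤
      |(∑ i ∈ Finset.range n, if W i ω ≤ Q p - δ then (1:ℝ) else 0) - n * F (Q p - δ)|}
    with hB2def
  set B3 : Set Ω := {ω | (n:ℝ) * (pp - p) ≤
      |(∑ i ∈ Finset.range n, if W i ω ≤ Q p + δ then (1:ℝ) else 0) - n * F (Q p + δ)|}
    with hB3def
  have hB1 : P B1 ≤ ENNReal.ofReal (u / 3) := by
    refine (cheb (Q p) n (M * Real.sqrt n) (by positivity)).trans
      (ENNReal.ofReal_le_ofReal ?_)
    have : (n:ℝ) / (M * Real.sqrt n) ^ 2 = u / 3 := by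
      rw [mul_pow, Real.sq_sqrt hn0.le, hMsq]
      field_simp
    exact this.le
  have hB2 : P B2 ≤ ENNReal.ofReal (u / 3) := by
    refine (cheb (Q p - δ) n ((n:ℝ) * (p - pm)) (mul_pos hn0 (by linarith))).trans
      (ENNReal.ofReal_le_ofReal hn2.le)
  have hB3 : P B3 ≤ ENNReal.ofReal (u / 3) := by
    refine (cheb (Q p + δ) n ((n:ℝ) * (pp - p)) (mul_pos hn0 (by linarith))).trans
      (ENNReal.ofReal_le_ofReal hn3.le)
  -- inclusion of the deviation event in the union of bad events
  have hsub : {ω | ε ≤ dist ((Real.sqrt n / (⌈(n : ℝ) * p⌉₊ : ℝ)) *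
        |signedBlockSum (fun i => orderStat W n i ω - Q p)
          ⌈(n : ℝ) * ((1 / (n : ℝ)) *
            ∑ i ∈ Finset.range n, if W i ω ≤ Q p then (1 : ℝ) else 0)⌉₊
          ⌈(n : ℝ) * p⌉₊|) 0} ⊆ B1 ∪ B2 ∪ B3 := by
    intro ω hω
    by_contra hno
    simp only [hB1def, hB2def, hB3def, Set.mem_union, Set.mem_setOf_eq, not_or, not_le] at hno
    obtain ⟨⟨h1, h2⟩, h3⟩ := hno
    rw [hFQ] at h1
    set k := (List.ofFn fun j : Fin n => W j ω).countP (fun y => decide (y ≤ Q p)) with hk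
    set km := (List.ofFn fun j : Fin n => W j ω).countP (fun y => decide (y ≤ Q p - δ)) with hkm
    set kp := (List.ofFn fun j : Fin n => W j ω).countP (fun y => decide (y ≤ Q p + δ)) with hkp
    set m := ⌈(n:ℝ) * p⌉₊ with hm
    have hS : ∀ t : ℝ, (∑ i ∈ Finset.range n, if W i ω ≤ t then (1:ℝ) else 0)
        = ((List.ofFn fun j : Fin n => W j ω).countP (fun y => decide (y ≤ t)) : ℝ) := by
      intro t
      rw [countP_ofFn n (fun i => W i ω) t]
      push_cast
      rfl
    rw [hS (Q p)] at h1
    rw [hS (Q p - δ), ← hpm] at h2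
    rw [hS (Q p + δ), ← hpp] at h3
    have h2' : (km : ℝ) < n * p := by
      have := abs_lt.mp h2
      linarith [this.2]
    have h3' : (n : ℝ) * p < kp := by
      have := abs_lt.mp h3
      linarith [this.1]
    -- facts about m
    have hm1 : (n:ℝ) * p ≤ m := Nat.le_ceil _
    have hm2 : (m:ℝ) < n * p + 1 := Nat.ceil_lt_add_one (by positivity)
    have hmn : m ≤ n := Nat.ceil_le.mpr (by nlinarith)
    have hm_pos : 0 < m := Nat.ceil_pos.mpr (by positivity)
    have hm_posR : (0:ℝ) < m := by exact_mod_cast hm_pos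
    -- natural number inequalities
    have hkm_lt_m : km < m := by exact_mod_cast lt_of_lt_of_le h2' hm1
    have hm_le_kp : m ≤ kp := Nat.ceil_le.mpr h3'.le
    have hkm_le_k : km ≤ k := List.countP_mono_left (by
      intro a _ ha
      simp only [decide_eq_true_eq] at ha ⊢
      linarith)
    have hk_le_kp : k ≤ kp := List.countP_mono_left (by
      intro a _ ha
      simp only [decide_eq_true_eq] at ha ⊢
      linarith)
    have hk_le_n : k ≤ n := by
      have := List.countP_le_length (l := List.ofFn fun j : Fin n => W j ω)
        (p := fun y => decide (y ≤ Q p))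
      rwa [List.length_ofFn] at this
    -- the random ceiling index equals k
    have hceil : ⌈(n : ℝ) * ((1 / (n : ℝ)) *
        ∑ i ∈ Finset.range n, if W i ω ≤ Q p then (1 : ℝ) else 0)⌉₊ = k := by
      rw [hS (Q p)]
      have h4 : (n:ℝ) * ((1/(n:ℝ)) * (k:ℝ)) = (k:ℝ) := by
        field_simp
      rw [h4, Nat.ceil_natCast]
    -- every term in the boundary block is within δ of Q p
    have hblock : ∀ i ∈ Finset.Icc (min k m + 1) (max k m),
        |orderStat W n i ω - Q p| ≤ δ := by
      intro i hi
      rw [Finset.mem_Icc] at hi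
      have hmaxn : max k m ≤ n := max_le hk_le_n hmn
      have hin : i - 1 < n := by omega
      by_cases hik : i ≤ k
      · have hQle : orderStat W n i ω ≤ Q p :=
          (orderStat_le_iff W n i ω (Q p) hin).mpr (by omega)
        have hQgt : ¬ orderStat W n i ω ≤ Q p - δ := by
          rw [orderStat_le_iff W n i ω _ hin]
          omega
        push_neg at hQgt
        rw [abs_le]
        constructor <;> linarith
      · push_neg at hik
        have hQgt : ¬ orderStat W n i ω ≤ Q p := by
          rw [orderStat_le_iff W n i ω _ hin]
          omega
        have hQle : orderStat W n i ω ≤ Q p + δ :=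
          (orderStat_le_iff W n i ω _ hin).mpr (by omega)
        push_neg at hQgt
        rw [abs_le]
        constructor <;> linarith
    have hb1 := abs_signedBlockSum_le (fun i => orderStat W n i ω - Q p) k m δ hblock
    have hcast : ((max k m - min k m : ℕ) : ℝ) ≤ M * Real.sqrt n + 1 := by
      have hceq : ((max k m - min k m : ℕ) : ℝ) = |(k:ℝ) - (m:ℝ)| := by
        rw [Nat.cast_sub min_le_max, Nat.cast_max, Nat.cast_min, max_sub_min_eq_abs]
        exact abs_sub_comm _ _
      rw [hceq]
      have htri : |(k:ℝ) - m| ≤ |(k:ℝ) - n * p| + |(n:ℝ) * p - m| := abs_sub_le _ _ _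
      have habs2 : |(n:ℝ) * p - m| ≤ 1 := by
        rw [abs_le]
        constructor <;> linarith
      linarith
    -- final numeric estimate
    have hb2 : |signedBlockSum (fun i => orderStat W n i ω - Q p) k m|
        ≤ (M * Real.sqrt n + 1) * δ :=
      hb1.trans (mul_le_mul_of_nonneg_right hcast hδpos.le)
    have hXle : (Real.sqrt n / (m:ℝ)) *
        |signedBlockSum (fun i => orderStat W n i ω - Q p) k m| ≤ ε / 2 := by
      have hs_nonneg : 0 ≤ Real.sqrt n / (m:ℝ) := by positivity
      calc (Real.sqrt n / (m:ℝ)) *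
            |signedBlockSum (fun i => orderStat W n i ω - Q p) k m|
          ≤ (Real.sqrt n / (m:ℝ)) * ((M * Real.sqrt n + 1) * δ) :=
            mul_le_mul_of_nonneg_left hb2 hs_nonneg
        _ ≤ ε / 2 := by
            rw [div_mul_eq_mul_div, div_le_iff₀ hm_posR]
            have hsq : Real.sqrt n * Real.sqrt n = n := Real.mul_self_sqrt hn0.le
            have hn1R : (1:ℝ) ≤ n := by exact_mod_cast hn1
            have hsle : Real.sqrt n ≤ n := by
              nlinarith [hsq, Real.sqrt_nonneg ((n:ℝ)), sq_nonneg (Real.sqrt (n:ℝ) - 1)]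
            have e1 : Real.sqrt n * ((M * Real.sqrt n + 1) * δ)
                = M * (Real.sqrt n * Real.sqrt n) * δ + Real.sqrt n * δ := by ring
            rw [e1, hsq]
            have e2 : Real.sqrt n * δ ≤ (n:ℝ) * δ :=
              mul_le_mul_of_nonneg_right hsle hδpos.le
            have e3 : δ * (2 * (M + 1)) = ε * p := by
              rw [hδ]
              field_simp
            nlinarith [hm1, hε.le, hδpos.le, hMpos.le]
    -- contradiction
    have hgoal : ε ≤ (Real.sqrt n / (m:ℝ)) *
        |signedBlockSum (fun i => orderStat W n i ω - Q p) k m| := by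
      have := hω
      simp only [Set.mem_setOf_eq, Real.dist_eq, sub_zero, hceil, ← hm] at this
      rwa [abs_of_nonneg (by positivity)] at this
    linarith
  -- combine
  calc P {ω | ε ≤ dist ((Real.sqrt n / (⌈(n : ℝ) * p⌉₊ : ℝ)) *
        |signedBlockSum (fun i => orderStat W n i ω - Q p)
          ⌈(n : ℝ) * ((1 / (n : ℝ)) *
            ∑ i ∈ Finset.range n, if W i ω ≤ Q p then (1 : ℝ) else 0)⌉₊
          ⌈(n : ℝ) * p⌉₊|) 0}
      ≤ P (B1 ∪ B2 ∪ B3) := measure_mono hsub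
    _ ≤ P B1 + P B2 + P B3 :=
        le_trans (measure_union_le _ _) (add_le_add_left (measure_union_le _ _) _)
    _ ≤ ENNReal.ofReal (u/3) + ENNReal.ofReal (u/3) + ENNReal.ofReal (u/3) :=
        add_le_add (add_le_add hB1 hB2) hB3
    _ = ENNReal.ofReal u := by
        rw [← ENNReal.ofReal_add (by positivity) (by positivity),
          ← ENNReal.ofReal_add (by positivity) (by positivity)]
        congr 1
        ring
    _ ≤ η := hu_le
end
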